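/- For all positive integers a and b one has E[(Y_a − τ(a))(Y_b − τ(b))] = σ(gcd(a, b)); that is, the covariance of Y_a and Y_b equals the sum of the common divisors of a and b. -/

import Mathlib

/-!
Since `E[Z_{1/d}] = 1/d`, the constants `τ(a)`, `τ(b)` are the means of `Y_a`, `Y_b`, so the
integral is `cov(Y_a, Y_b)`. Expanding bilinearly, independence kills every term `d ≠ e`, and each
common divisor `d` contributes `d² · Var(Z_{1/d}) = d`. The Poisson moments come from the factorial
moments `E[Z (Z - 1) ⋯ (Z - k + 1)] = r ^ k` of `Po(r)`.
-/

open MeasureTheory ProbabilityTheory Finset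
open scoped NNReal Nat

lemma Nat.divisors_inter_divisors {a b : ℕ} (ha : a ≠ 0) (hb : b ≠ 0) :
    a.divisors ∩ b.divisors = (a.gcd b).divisors := by
  ext d
  simp [Nat.dvd_gcd_iff, ha, hb]

namespace ProbabilityTheory

section PoissonMoments

lemma hasSum_descFactorial_poissonMeasure (r : ℝ≥0) (k : ℕ) :
    HasSum (fun n ↦ Real.exp (-r) * r ^ n / n ! * (n.descFactorial k : ℝ)) (r ^ k) := by
  rw [← hasSum_nat_add_iff' k]
  have hlow : ∑ n ∈ range k, Real.exp (-r) * r ^ n / n ! * (n.descFactorial k : ℝ) = 0 :=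
    sum_eq_zero fun n hn ↦ by
      rw [Nat.descFactorial_eq_zero_iff_lt.mpr (mem_range.mp hn)]; simp
  rw [hlow, sub_zero, ← mul_one ((r : ℝ) ^ k)]
  refine ((hasSum_one_poissonMeasure r).mul_left _).congr_fun fun n ↦ ?_
  have h := Nat.factorial_mul_descFactorial (Nat.le_add_left k n)
  rw [Nat.add_sub_cancel] at h
  rw [← h]
  push_cast
  field_simp
  ring

lemma hasSum_natCast_poissonMeasure (r : ℝ≥0) :
    HasSum (fun n ↦ Real.exp (-r) * r ^ n / n ! * (n : ℝ)) r := by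
  simpa using hasSum_descFactorial_poissonMeasure r 1

lemma hasSum_natCast_sq_poissonMeasure (r : ℝ≥0) :
    HasSum (fun n ↦ Real.exp (-r) * r ^ n / n ! * (n : ℝ) ^ 2) (r ^ 2 + r) := by
  refine ((hasSum_descFactorial_poissonMeasure r 2).add
    (hasSum_natCast_poissonMeasure r)).congr_fun fun n ↦ ?_
  rw [← mul_add, Nat.cast_descFactorial_two]
  ring

lemma memLp_two_natCast_poissonMeasure (r : ℝ≥0) :
    MemLp (fun n : ℕ ↦ (n : ℝ)) 2 Po(r) := by
  rw [memLp_two_iff_integrable_sq .of_discrete, integrable_poissonMeasure_iff]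
  simpa using (hasSum_natCast_sq_poissonMeasure r).summable

lemma integral_natCast_poissonMeasure (r : ℝ≥0) : ∫ n, (n : ℝ) ∂Po(r) = r := by
  simpa [integral_poissonMeasure] using (hasSum_natCast_poissonMeasure r).tsum_eq

lemma variance_natCast_poissonMeasure (r : ℝ≥0) : Var[fun n : ℕ ↦ (n : ℝ); Po(r)] = r := by
  rw [variance_eq_sub (memLp_two_natCast_poissonMeasure r), integral_natCast_poissonMeasure]
  have h : ∫ n, (n : ℝ) ^ 2 ∂Po(r) = r ^ 2 + r := by
    simpa [integral_poissonMeasure] using (hasSum_natCast_sq_poissonMeasure r).tsum_eq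
  simp only [Pi.pow_apply, h]
  ring

end PoissonMoments

section PoissonRandomVariable

variable {Ω : Type*} [MeasurableSpace Ω] {P : Measure Ω} {Z : Ω → ℕ} {r : ℝ≥0}

lemma hasLaw_poissonMeasure_of_measure_eq (hZ : Measurable Z)
    (h : ∀ n : ℕ, P {ω | Z ω = n} = ENNReal.ofReal (Real.exp (-r) * r ^ n / n !)) :
    HasLaw Z Po(r) P where
  aemeasurable := hZ.aemeasurable
  map_eq := Measure.ext_of_singleton fun n ↦ by
    rw [Measure.map_apply hZ (measurableSet_singleton n), poissonMeasure_singleton]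
    exact h n

lemma HasLaw.memLp_two_natCast_poissonMeasure (hZ : HasLaw Z Po(r) P) :
    MemLp (fun ω ↦ (Z ω : ℝ)) 2 P := by
  have h := ProbabilityTheory.memLp_two_natCast_poissonMeasure r
  rw [← hZ.map_eq] at h
  exact (memLp_map_measure_iff h.aestronglyMeasurable hZ.aemeasurable).mp h

lemma HasLaw.integral_natCast_poissonMeasure (hZ : HasLaw Z Po(r) P) :
    P[fun ω ↦ (Z ω : ℝ)] = (r : ℝ) :=
  (hZ.integral_comp (f := fun n : ℕ ↦ (n : ℝ)) .of_discrete).trans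
    (ProbabilityTheory.integral_natCast_poissonMeasure r)

lemma HasLaw.variance_natCast_poissonMeasure (hZ : HasLaw Z Po(r) P) :
    Var[fun ω ↦ (Z ω : ℝ); P] = r := by
  rw [← covariance_self (by fun_prop), hZ.covariance_fun_comp (f := fun n : ℕ ↦ (n : ℝ))
    .of_discrete .of_discrete, covariance_self .of_discrete,
    ProbabilityTheory.variance_natCast_poissonMeasure]

end PoissonRandomVariable

lemma covariance_sum_const_mul_sum_const_mul {Ω ι : Type*} [MeasurableSpace Ω] {μ : Measure Ω}
    [IsProbabilityMeasure μ] [DecidableEq ι] {X : ι → Ω → ℝ} {s t : Finset ι}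
    (hindep : Pairwise fun i j ↦ IndepFun (X i) (X j) μ)
    (hs : ∀ i ∈ s, MemLp (X i) 2 μ) (ht : ∀ i ∈ t, MemLp (X i) 2 μ) (c c' : ι → ℝ) :
    cov[fun ω ↦ ∑ i ∈ s, c i * X i ω, fun ω ↦ ∑ j ∈ t, c' j * X j ω; μ]
      = ∑ i ∈ s ∩ t, c i * c' i * Var[X i; μ] := by
  rw [covariance_fun_sum_fun_sum' (fun i hi ↦ (hs i hi).const_mul (c i))
    (fun j hj ↦ (ht j hj).const_mul (c' j))]
  have hterm : ∀ i ∈ s, ∀ j ∈ t, cov[fun ω ↦ c i * X i ω, fun ω ↦ c' j * X j ω; μ]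
      = if i = j then c i * c' i * Var[X i; μ] else 0 := by
    intro i hi j hj
    rw [covariance_const_mul_left, covariance_const_mul_right]
    split_ifs with hij
    · subst hij
      rw [covariance_self (hs i hi).aemeasurable]
      ring
    · rw [(hindep hij).covariance_eq_zero (hs i hi) (ht j hj)]
      ring
  rw [sum_congr rfl fun i hi ↦ sum_congr rfl (hterm i hi)]
  simp_rw [sum_ite_eq, ← sum_filter, filter_mem_eq_inter]

section DivisorSums

variable {Ω : Type*} [MeasurableSpace Ω] {P : Measure Ω} [IsProbabilityMeasure P] {Z : ℕ → Ω → ℕ}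

lemma integral_sum_divisors_mul_poisson
    (hlaw : ∀ d, 0 < d → HasLaw (Z d) Po((d : ℝ≥0)⁻¹) P) (c : ℕ) :
    P[fun ω ↦ ∑ d ∈ c.divisors, (d : ℝ) * (Z d ω : ℝ)] = (c.divisors.card : ℝ) := by
  have hint : ∀ d ∈ c.divisors, Integrable (fun ω ↦ (d : ℝ) * (Z d ω : ℝ)) P := fun d hd ↦
    ((hlaw d (Nat.pos_of_mem_divisors hd)).memLp_two_natCast_poissonMeasure.integrable
      one_le_two).const_mul _
  rw [integral_finsetSum _ hint, card_eq_sum_ones, Nat.cast_sum]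
  refine sum_congr rfl fun d hd ↦ ?_
  have hd_pos := Nat.pos_of_mem_divisors hd
  have hd_ne : (d : ℝ) ≠ 0 := by exact_mod_cast hd_pos.ne'
  rw [integral_const_mul, (hlaw d hd_pos).integral_natCast_poissonMeasure]
  push_cast
  field_simp

lemma covariance_sum_divisors_mul_poisson
    (hlaw : ∀ d, 0 < d → HasLaw (Z d) Po((d : ℝ≥0)⁻¹) P)
    (hindep : Pairwise fun i j ↦ IndepFun (Z i) (Z j) P) {a b : ℕ} (ha : a ≠ 0) (hb : b ≠ 0) :
    cov[fun ω ↦ ∑ d ∈ a.divisors, (d : ℝ) * (Z d ω : ℝ),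
      fun ω ↦ ∑ d ∈ b.divisors, (d : ℝ) * (Z d ω : ℝ); P] = ∑ d ∈ (a.gcd b).divisors, (d : ℝ) := by
  have hL2 {c : ℕ} : ∀ d ∈ c.divisors, MemLp (fun ω ↦ (Z d ω : ℝ)) 2 P := fun d hd ↦
    (hlaw d (Nat.pos_of_mem_divisors hd)).memLp_two_natCast_poissonMeasure
  rw [covariance_sum_const_mul_sum_const_mul (X := fun k ω ↦ (Z k ω : ℝ))
    (fun i j hij ↦ (hindep hij).comp measurable_from_nat measurable_from_nat) hL2 hL2,
    Nat.divisors_inter_divisors ha hb]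
  refine sum_congr rfl fun d hd ↦ ?_
  have hd_pos := Nat.pos_of_mem_divisors hd
  have hd_ne : (d : ℝ) ≠ 0 := by exact_mod_cast hd_pos.ne'
  rw [(hlaw d hd_pos).variance_natCast_poissonMeasure]
  push_cast
  field_simp

end DivisorSums

end ProbabilityTheory

/-- Let `{Z k}` be mutually independent Poisson random variables with parameters `1/k`,
and `Y a = ∑_{d ∣ a} d • Z d`. For all positive integers `a, b`,
`E[(Y a − τ(a))(Y b − τ(b))] = σ(gcd(a, b))`: the covariance of `Y a` and `Y b` equals
the sum of the common divisors of `a` and `b`. -/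
theorem stmt5 {Ω : Type*} [MeasurableSpace Ω] (P : Measure Ω) [IsProbabilityMeasure P]
    (Z : ℕ → Ω → ℕ)
    (hmeas : ∀ k, Measurable (Z k))
    (hpois : ∀ k : ℕ, 1 ≤ k → ∀ n : ℕ,
      P {ω | Z k ω = n} =
        ENNReal.ofReal (Real.exp (-(1 / k)) * (1 / k : ℝ) ^ n / n.factorial))
    (hindep : iIndepFun Z P)
    (a b : ℕ) (ha : 0 < a) (hb : 0 < b) :
    ∫ ω, ((∑ d ∈ a.divisors, (d : ℝ) * (Z d ω : ℝ)) - (a.divisors.card : ℝ)) *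
        ((∑ d ∈ b.divisors, (d : ℝ) * (Z d ω : ℝ)) - (b.divisors.card : ℝ)) ∂P
      = ∑ d ∈ (Nat.gcd a b).divisors, (d : ℝ) := by
  have hlaw : ∀ d, 0 < d → HasLaw (Z d) Po((d : ℝ≥0)⁻¹) P := fun d hd ↦
    hasLaw_poissonMeasure_of_measure_eq (hmeas d) (by simpa using hpois d hd)
  rw [← covariance_sum_divisors_mul_poisson hlaw (fun i j hij ↦ hindep.indepFun hij)
    ha.ne' hb.ne', covariance, integral_sum_divisors_mul_poisson hlaw,
    integral_sum_divisors_mul_poisson hlaw]
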